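/- Let G be a totally disconnected locally compact group, φ : G → G a topological automorphism, and U an open compact subgroup. Set Cₙ(φ,U) = ⋂_{i=0}^{n-1} φ^{-i}(U) and cₙ = [U : Cₙ(φ,U)]. Then the limit H_top(φ,U) = lim_{n→∞} (log cₙ)/n exists and equals log α, where α is the eventual value of the sequence αₙ = c_{n+1}/cₙ. -/

import Mathlib

open Filter Topology

variable {G : Type*} [Group G]

/-- The `n`-th `φ`-cotrajectory `Cₙ(φ,U) = ⋂_{i<n} φ^{-i}(U)`. -/
def cotrajN (φ : MulAut G) (U : Subgroup G) (n : ℕ) : Subgroup G :=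
  ⨅ i ∈ Finset.range n, Subgroup.comap (φ ^ i).toMonoidHom U

/-- `cₙ = [U : Cₙ(φ,U)]`. -/
noncomputable def entIdx (φ : MulAut G) (U : Subgroup G) (n : ℕ) : ℕ :=
  (cotrajN φ U n).relIndex U

/-
For `n ≥ 1` the cotrajectories form a chain `Cₙ₊₁ ≤ Cₙ ≤ U`, so multiplicativity of the relative
index gives `cₙ₊₁ = [Cₙ : Cₙ₊₁] · cₙ = α · cₙ` for `n ≥ n₀`, i.e. `c_{n₀+k} = c_{n₀} αᵏ`. Every `Cₙ`
is open (`φ` is continuous) and `U` is compact, so all `cₙ` are finite and nonzero; hence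
`log cₙ = log c_{n₀} + (n - n₀) log α` and `log cₙ / n → log α`.
-/

namespace MulAut

lemma continuous_pow [TopologicalSpace G] {φ : MulAut G} (hφ : Continuous φ) (i : ℕ) :
    Continuous ⇑(φ ^ i) := by
  induction i with
  | zero => exact continuous_id
  | succ i ih => rw [pow_succ, coe_mul]; exact ih.comp hφ

end MulAut

section Cotrajectory

variable (φ : MulAut G) (U : Subgroup G)

lemma cotrajN_succ (n : ℕ) :
    cotrajN φ U (n + 1) = cotrajN φ U n ⊓ U.comap (φ ^ n).toMonoidHom := by
  simp only [cotrajN, Finset.range_add_one, Finset.iInf_insert, inf_comm]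

lemma cotrajN_succ_le (n : ℕ) : cotrajN φ U (n + 1) ≤ cotrajN φ U n := by
  rw [cotrajN_succ]
  exact inf_le_left

lemma cotrajN_le {n : ℕ} (hn : 1 ≤ n) : cotrajN φ U n ≤ U :=
  fun _ hx => (biInf_le (fun i => U.comap (φ ^ i).toMonoidHom) (Finset.mem_range.mpr hn)) hx

lemma isOpen_cotrajN [TopologicalSpace G] {φ : MulAut G} (hφ : Continuous φ) {U : Subgroup G}
    (hUo : IsOpen (U : Set G)) (n : ℕ) : IsOpen (cotrajN φ U n : Set G) := by
  induction n with
  | zero => simp [cotrajN]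
  | succ n ih =>
    rw [cotrajN_succ, Subgroup.coe_inf]
    exact ih.inter (hUo.preimage (MulAut.continuous_pow hφ n))

lemma entIdx_succ {n : ℕ} (hn : 1 ≤ n) :
    entIdx φ U (n + 1) = (cotrajN φ U (n + 1)).relIndex (cotrajN φ U n) * entIdx φ U n :=
  (Subgroup.relIndex_mul_relIndex _ _ _ (cotrajN_succ_le φ U n) (cotrajN_le φ U hn)).symm

lemma entIdx_add_eq_mul_pow {α n₀ : ℕ} (hn₀ : 1 ≤ n₀)
    (hα : ∀ n ≥ n₀, (cotrajN φ U (n + 1)).relIndex (cotrajN φ U n) = α) (k : ℕ) :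
    entIdx φ U (n₀ + k) = entIdx φ U n₀ * α ^ k := by
  induction k with
  | zero => simp
  | succ k ih =>
    rw [← add_assoc, entIdx_succ φ U (hn₀.trans (Nat.le_add_right n₀ k)),
      hα _ (Nat.le_add_right n₀ k), ih, pow_succ]
    ring

end Cotrajectory

lemma Subgroup.relIndex_ne_zero_of_isOpen_of_isCompact [TopologicalSpace G]
    [IsTopologicalGroup G] {K L : Subgroup G} (hK : IsOpen (K : Set G))
    (hL : IsCompact (L : Set G)) : K.relIndex L ≠ 0 := by
  have : CompactSpace L := isCompact_iff_compactSpace.mp hL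
  have : Finite (L ⧸ K.subgroupOf L) := (K.subgroupOf L).quotient_finite_of_isOpen
    (Subgroup.subgroupOf_isOpen L K hK)
  exact Subgroup.index_ne_zero_of_finite

lemma tendsto_log_div_of_eq_mul_pow {f : ℕ → ℝ} {c a : ℝ} {n₀ : ℕ} (hc : c ≠ 0) (ha : a ≠ 0)
    (hf : ∀ k, f (n₀ + k) = c * a ^ k) :
    Tendsto (fun n : ℕ => Real.log (f n) / n) atTop (𝓝 (Real.log a)) := by
  have hlim : Tendsto (fun n : ℕ => (Real.log c - n₀ * Real.log a) / n + Real.log a) atTop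
      (𝓝 (Real.log a)) := by
    simpa using (tendsto_const_div_atTop_nhds_zero_nat _).add_const (Real.log a)
  refine hlim.congr' ?_
  filter_upwards [eventually_ge_atTop n₀, eventually_gt_atTop 0] with n hn₀ hn
  obtain ⟨k, rfl⟩ := Nat.exists_eq_add_of_le hn₀
  rw [hf, Real.log_mul hc (pow_ne_zero k ha), Real.log_pow]
  field_simp
  push_cast
  ring

theorem tendsto_log_entIdx_div_general [TopologicalSpace G] [IsTopologicalGroup G]
    (φ : MulAut G) (hφ : Continuous φ)
    (U : Subgroup G) (hUo : IsOpen (U : Set G)) (hUc : IsCompact (U : Set G))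
    (α n₀ : ℕ) (hn₀ : 1 ≤ n₀)
    (hα : ∀ n ≥ n₀, (cotrajN φ U (n + 1)).relIndex (cotrajN φ U n) = α) :
    Tendsto (fun n : ℕ => Real.log (entIdx φ U n) / n) atTop (nhds (Real.log α)) := by
  have hc : ∀ n, entIdx φ U n ≠ 0 := fun n =>
    Subgroup.relIndex_ne_zero_of_isOpen_of_isCompact (isOpen_cotrajN hφ hUo n) hUc
  have hpow := entIdx_add_eq_mul_pow φ U hn₀ hα
  have hα0 : α ≠ 0 := by
    have h1 := hpow 1
    rw [pow_one] at h1
    exact right_ne_zero_of_mul (h1 ▸ hc (n₀ + 1))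
  exact tendsto_log_div_of_eq_mul_pow (Nat.cast_ne_zero.mpr (hc n₀)) (Nat.cast_ne_zero.mpr hα0)
    fun k => by rw [hpow k]; push_cast; rfl

theorem tendsto_log_entIdx_div [TopologicalSpace G] [IsTopologicalGroup G]
    [LocallyCompactSpace G] [TotallyDisconnectedSpace G]
    (φ : MulAut G) (hφ : Continuous φ) (hφ' : Continuous φ⁻¹)
    (U : Subgroup G) (hUo : IsOpen (U : Set G)) (hUc : IsCompact (U : Set G))
    (α n₀ : ℕ) (hn₀ : 1 ≤ n₀)
    (hα : ∀ n ≥ n₀, (cotrajN φ U (n + 1)).relIndex (cotrajN φ U n) = α) :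
    Tendsto (fun n : ℕ => Real.log (entIdx φ U n) / n) atTop (nhds (Real.log α)) :=
  tendsto_log_entIdx_div_general φ hφ U hUo hUc α n₀ hn₀ hα
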